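/- Let f = Σ x_i p_{w_i} be a counting function on F_n of depth L with x_u = 0 whenever u starts with a_1 or a_1^{-1} or ends with a_1 or a_1^{-1} (and x_ε = 0). Then for every 'clean' reduced word w (one that neither starts nor ends with a_1^{±1}) and v = w a_1^L, one has f(v^k) = k·f(v) for all k ≥ 1. Consequently, if f is bounded then f(w a_1^L) = 0 for every clean word w. -/

import Mathlib

open List Finset

/-- Number of occurrences of `w` as a contiguous subword of `v`. -/
def occ {α : Type*} [DecidableEq α] (w v : List α) : ℕ :=
  ((List.range (v.length + 1 - w.length)).filter (fun i => decide (w <+: v.drop i))).length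

/-- Elementary counting function, with the convention `p_ε(v) = |v|`. -/
def cnt {α : Type*} [DecidableEq α] (w v : List α) : ℚ :=
  if w = [] then v.length else occ w v

/-- The inverse of a letter of `S̄`: letters are pairs (generator, sign). -/
def invL {n : ℕ} (a : Fin n × Bool) : Fin n × Bool := (a.1, !a.2)

/-- The inverse of a (reduced) word. -/
def invW {n : ℕ} (w : List (Fin n × Bool)) : List (Fin n × Bool) := (w.map invL).reverse

def redB {n : ℕ} : List (Fin n × Bool) → Bool
  | a :: b :: t => decide (b ≠ invL a) && redB (b :: t)
  | _ => true

/-- A word over `S̄` is reduced if no letter is followed by its inverse. -/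
def Red {n : ℕ} (w : List (Fin n × Bool)) : Prop := redB w = true

instance {n : ℕ} : DecidablePred (Red (n := n)) := fun _ => instDecidableEqBool _ _

/-- Left extension relation `l_w = p_w - Σ_{s : sw reduced} p_{sw}`. -/
def lgrp {n : ℕ} (w v : List (Fin n × Bool)) : ℚ :=
  cnt w v - ∑ s ∈ Finset.univ.filter (fun s => Red (s :: w)), cnt (s :: w) v

/-- Right extension relation `r_w = p_w - Σ_{s : ws reduced} p_{ws}`. -/
def rgrp {n : ℕ} (w v : List (Fin n × Bool)) : ℚ :=
  cnt w v - ∑ s ∈ Finset.univ.filter (fun s => Red (w ++ [s])), cnt (w ++ [s]) v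

/-- The map `σ₁` sending a function on F_n to `f - f ∘ (·⁻¹)`; on counting functions
it sends `p_w` to the Brooks quasimorphism `φ_w = p_w - p_{w⁻¹}`. -/
def sig1 {n : ℕ} (f : List (Fin n × Bool) → ℚ) : List (Fin n × Bool) → ℚ :=
  fun v => f v - f (invW v)

/-! No word `u` with `|u| ≤ L` that does not start with `a₁` can occur in
`v^k = (w a₁^L)^k` across the boundary of two copies of `v`: such an occurrence would start inside a
block `a₁^L`, hence with `a₁`. So `p_u(v^k) = k p_u(v)`, and `f(v^k) = k f(v)`. Since `w` is clean,
`v^k` is reduced, so a bound `|f| ≤ C` on reduced words gives `k |f(v)| ≤ C` for all `k`, i.e.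
`f(v) = 0`. -/

lemma head?_eq_of_prefix_drop {α : Type*} {u l : List α} (hu : u ≠ []) {i : ℕ}
    (h : u <+: l.drop i) : l[i]? = u.head? := by
  obtain ⟨t, ht⟩ := h
  rw [← List.head?_drop, ← ht, List.head?_append_of_ne_nil _ hu]

section Occurrences

variable {α : Type*} [DecidableEq α]

lemma occ_eq_countP_range {u : List α} (hu : u ≠ []) (v : List α) :
    occ u v = (List.range v.length).countP (fun i => u <+: v.drop i) := by
  have hu1 : 1 ≤ u.length := List.length_pos_iff.mpr hu
  obtain ⟨r, hr⟩ : ∃ r, v.length = (v.length + 1 - u.length) + r :=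
    ⟨_, (Nat.add_sub_of_le (by omega)).symm⟩
  rw [occ, ← List.countP_eq_length_filter, hr, List.range_add, List.countP_append, List.countP_map,
    ← hr]
  suffices h : List.countP _ (List.range r) = 0 by rw [h]; rfl
  refine List.countP_eq_zero.mpr fun j _ hpre => ?_
  simp only [Function.comp_apply, decide_eq_true_eq] at hpre
  have := hpre.length_le
  simp only [List.length_drop] at this
  omega

lemma occ_append {u : List α} (hu : u ≠ []) (A B : List α)
    (hstraddle : ∀ i < A.length, u <+: (A ++ B).drop i → i + u.length ≤ A.length) :
    occ u (A ++ B) = occ u A + occ u B := by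
  rw [occ_eq_countP_range hu, occ_eq_countP_range hu, occ_eq_countP_range hu, List.length_append,
    List.range_add, List.countP_append, List.countP_map]
  congr 1
  · refine List.countP_congr fun i hi => ?_
    rw [List.mem_range] at hi
    simp only [decide_eq_true_eq, List.drop_append_of_le_length hi.le]
    refine ⟨fun h => List.prefix_of_prefix_length_le h (List.prefix_append _ _) ?_,
      fun h => h.trans (List.prefix_append _ _)⟩
    have := hstraddle i hi (by rwa [List.drop_append_of_le_length hi.le])
    simp only [List.length_drop]
    omega
  · simp only [Function.comp_def, List.drop_length_add_append]

lemma occ_append_replicate_append {u : List α} (hu : u ≠ []) {a : α} (ha : u.head? ≠ some a)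
    {L : ℕ} (hL : u.length ≤ L) (w B : List α) :
    occ u (w ++ List.replicate L a ++ B) = occ u (w ++ List.replicate L a) + occ u B := by
  refine occ_append hu _ _ fun i hi hpre => ?_
  by_contra hcross
  simp only [List.length_append, List.length_replicate] at hi hcross
  apply ha
  rw [← head?_eq_of_prefix_drop hu hpre, List.getElem?_append_left (by simpa using hi),
    List.getElem?_append_right (by omega), List.getElem?_replicate, if_pos (by omega)]

lemma occ_flatten_replicate {u : List α} (hu : u ≠ []) {a : α} (ha : u.head? ≠ some a)
    {L : ℕ} (hL : u.length ≤ L) (w : List α) (k : ℕ) :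
    occ u (List.replicate k (w ++ List.replicate L a)).flatten =
      k * occ u (w ++ List.replicate L a) := by
  induction k with
  | zero => simp [occ_eq_countP_range hu]
  | succ k ih =>
    rw [List.replicate_succ, List.flatten_cons, occ_append_replicate_append hu ha hL, ih]
    ring

lemma sum_mul_occ_flatten_replicate (s : Finset (List α)) (c : List α → ℚ) {a : α} {L : ℕ}
    (hs : ∀ u ∈ s, u ≠ [] ∧ u.length ≤ L ∧ u.head? ≠ some a) (w : List α) (k : ℕ) :
    ∑ u ∈ s, c u * (occ u (List.replicate k (w ++ List.replicate L a)).flatten : ℚ) =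
      k * ∑ u ∈ s, c u * (occ u (w ++ List.replicate L a) : ℚ) := by
  rw [Finset.mul_sum]
  refine Finset.sum_congr rfl fun u hu => ?_
  obtain ⟨hne, hL, ha⟩ := hs u hu
  rw [occ_flatten_replicate hne ha hL]
  push_cast
  ring

end Occurrences

section Reduced

variable {n : ℕ}

@[simp]
lemma invL_invL (a : Fin n × Bool) : invL (invL a) = a := by
  simp [invL]

lemma invL_ne_self (a : Fin n × Bool) : invL a ≠ a := by
  simp [invL, Prod.ext_iff]

lemma red_iff_isChain (l : List (Fin n × Bool)) : Red l ↔ l.IsChain (fun a b => b ≠ invL a) := by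
  induction l with
  | nil => simp [Red, redB]
  | cons a t ih =>
    cases t with
    | nil => simp [Red, redB]
    | cons b s =>
      rw [List.isChain_cons_cons, ← ih]
      simp [Red, redB]

lemma red_append_replicate {w : List (Fin n × Bool)} (hw : Red w) {a : Fin n × Bool}
    (hlast : w.getLast? ≠ some (invL a)) (L : ℕ) : Red (w ++ List.replicate L a) := by
  rw [red_iff_isChain] at hw ⊢
  refine List.isChain_append.mpr ⟨hw, List.isChain_replicate_of_rel L (invL_ne_self a).symm, ?_⟩
  rintro x hx y hy rfl
  rw [List.head?_replicate] at hy
  split_ifs at hy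
  · simp at hy
  rw [Option.mem_some_iff] at hy
  exact hlast (by rw [hy, invL_invL]; exact hx)

lemma red_flatten_replicate {v : List (Fin n × Bool)} (hv : Red v)
    (hwrap : ∀ x ∈ v.getLast?, ∀ y ∈ v.head?, y ≠ invL x) (k : ℕ) :
    Red (List.replicate k v).flatten := by
  rcases eq_or_ne v [] with rfl | hne
  · simp [Red, redB]
  rw [red_iff_isChain] at hv ⊢
  refine (List.isChain_flatten (by simp [hne.symm])).mpr ⟨by simp [hv], ?_⟩
  exact List.isChain_replicate_of_rel k hwrap

lemma red_flatten_replicate_append_replicate {w : List (Fin n × Bool)} (hw : Red w) (hne : w ≠ [])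
    {a : Fin n × Bool} (hhead : w.head? ≠ some (invL a)) (hlast : w.getLast? ≠ some (invL a))
    {L : ℕ} (hL : 0 < L) (k : ℕ) : Red (List.replicate k (w ++ List.replicate L a)).flatten := by
  refine red_flatten_replicate (red_append_replicate hw hlast L) (fun x hx y hy => ?_) k
  rw [List.getLast?_append_of_ne_nil _ (by simpa using hL.ne'), List.getLast?_replicate,
    if_neg (by omega), Option.mem_some_iff] at hx
  rw [List.head?_append_of_ne_nil _ hne, Option.mem_def] at hy
  rintro rfl
  exact hhead (hx ▸ hy)

end Reduced

lemma eq_zero_of_forall_abs_nat_mul_le {K : Type*} [Field K] [LinearOrder K] [IsStrictOrderedRing K]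
    [Archimedean K] {c C : K} (h : ∀ k : ℕ, |k * c| ≤ C) : c = 0 := by
  by_contra hc
  obtain ⟨k, hk⟩ := exists_nat_gt (C / |c|)
  rw [div_lt_iff₀ (abs_pos.mpr hc)] at hk
  have := h k
  rw [abs_mul, Nat.abs_cast] at this
  linarith

/-- If the coefficients of f vanish on words starting or ending with a₁^{±1} (and on ε),
then for every clean word w and v = w a₁^L (L the depth of f) one has f(v^k) = k f(v);
consequently, if f is bounded then f(w a₁^L) = 0 for every clean word w. -/
theorem stmt_16 (n : ℕ) (hn : 2 ≤ n) (x : List (Fin n × Bool) →₀ ℚ) (L : ℕ)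
    (hsupp : ∀ u ∈ x.support, Red u ∧ u ≠ [] ∧
      u.head? ≠ some ((⟨0, by omega⟩ : Fin n), true) ∧
      u.head? ≠ some ((⟨0, by omega⟩ : Fin n), false) ∧
      u.getLast? ≠ some ((⟨0, by omega⟩ : Fin n), true) ∧
      u.getLast? ≠ some ((⟨0, by omega⟩ : Fin n), false))
    (hdepth : ∀ u ∈ x.support, u.length ≤ L) :
    ∀ w : List (Fin n × Bool), Red w → w ≠ [] →
      w.head? ≠ some ((⟨0, by omega⟩ : Fin n), true) →
      w.head? ≠ some ((⟨0, by omega⟩ : Fin n), false) →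
      w.getLast? ≠ some ((⟨0, by omega⟩ : Fin n), true) →
      w.getLast? ≠ some ((⟨0, by omega⟩ : Fin n), false) →
      (∀ k : ℕ, 1 ≤ k →
        ∑ u ∈ x.support, x u * (occ u (List.flatten (List.replicate k
            (w ++ List.replicate L ((⟨0, by omega⟩ : Fin n), true)))) : ℚ) =
          k * ∑ u ∈ x.support, x u *
            (occ u (w ++ List.replicate L ((⟨0, by omega⟩ : Fin n), true)) : ℚ)) ∧
      ((∃ C : ℚ, ∀ v : List (Fin n × Bool), Red v →
          |∑ u ∈ x.support, x u * (occ u v : ℚ)| ≤ C) →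
        ∑ u ∈ x.support, x u *
          (occ u (w ++ List.replicate L ((⟨0, by omega⟩ : Fin n), true)) : ℚ) = 0) := by
  intro w hw hne _ hhead _ hlast
  have hpow := sum_mul_occ_flatten_replicate x.support x
    (fun u hu => ⟨(hsupp u hu).2.1, hdepth u hu, (hsupp u hu).2.2.1⟩) w
  refine ⟨fun k _ => hpow k, fun ⟨C, hC⟩ => ?_⟩
  rcases Nat.eq_zero_or_pos L with rfl | hL
  · exact Finset.sum_eq_zero fun u hu =>
      absurd (hdepth u hu) (not_le.mpr (List.length_pos_iff.mpr (hsupp u hu).2.1))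
  · refine eq_zero_of_forall_abs_nat_mul_le (C := C) fun k => ?_
    rw [← hpow k]
    exact hC _ (red_flatten_replicate_append_replicate (a := (_, true)) hw hne hhead hlast hL k)
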